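/- Let n = qa with a ≥ 4 and q ≥ 3, or n = qa + r with q ≥ 2, 1 ≤ r ≤ a-1 and 4 ≤ a ≤ r + q + 1. Then the diameter of the oriented circulant graph C⃗(n;1,a) equals q + a - 2, achieved by the distance from v_0 to v_{qa-1}. -/

import Mathlib

/-- Arc relation of the oriented circulant graph C⃗(n;1,a): arcs u → u+1 and u → u+a (mod n). -/
def circArc (n : ℕ) (a : ℤ) (u v : ZMod n) : Prop :=
  v = u + 1 ∨ v = u + (a : ZMod n)

/-- There is a directed walk of length k from u to v in C⃗(n;1,a). -/
def circSteps (n : ℕ) (a : ℤ) (u v : ZMod n) (k : ℕ) : Prop :=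
  ∃ g : ℕ → ZMod n, g 0 = u ∧ g k = v ∧ ∀ i < k, circArc n a (g i) (g (i + 1))

/-- Directed distance: length of a shortest directed path from u to v. -/
noncomputable def circDist (n : ℕ) (a : ℤ) (u v : ZMod n) : ℕ :=
  sInf {k | circSteps n a u v k}

/-- Eccentricity of a vertex: maximum distance from it to any vertex. -/
noncomputable def circEcc (n : ℕ) (a : ℤ) (u : ZMod n) : ℕ :=
  sSup {d | ∃ v, d = circDist n a u v}

/-- Diameter: maximum eccentricity. -/
noncomputable def circDiam (n : ℕ) (a : ℤ) : ℕ :=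
  sSup {d | ∃ u, d = circEcc n a u}

/-- f is an independent broadcast on C⃗(n;1,a). -/
def IsIndepBroadcast (n : ℕ) (a : ℤ) (f : ZMod n → ℕ) : Prop :=
  (∀ v, f v ≤ circEcc n a v) ∧
  ∀ u v : ZMod n, u ≠ v → 0 < f u → 0 < f v → f u < circDist n a u v

/-- Cost of a broadcast: sum of its values over all vertices. -/
def circCost (n : ℕ) (f : ZMod n → ℕ) : ℕ :=
  ∑ i ∈ Finset.range n, f (i : ZMod n)

/-- The broadcast independence number of C⃗(n;1,a). -/
noncomputable def betaB (n : ℕ) (a : ℤ) : ℕ :=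
  sSup {c | ∃ f : ZMod n → ℕ, IsIndepBroadcast n a f ∧ c = circCost n f}

/-!
Arcs commute, so a walk of length `k` from `u` to `v` amounts to a split `k = i + j` with
`v = u + i + j a` in `ZMod n`; in particular all distances are translation invariant. With
`n = q a + r`, `r < a`, every residue is reached along its base-`a` digits in at most `q + a - 2`
steps. Conversely, a walk to `q a - 1` gives `i + j a = N n + q a - 1` for some `N`; bounding the
number `j` of long jumps by `(N + 1) q - 1` if `r = 0`, and by `(N + 1) q + N - 1` otherwise,
forces `i + j ≥ q + a - 2 + N q`, resp. `i + j ≥ q + a - 2 + N (r + q + 1 - a)`.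
-/

section Walks

variable {n : ℕ} {a : ℤ}

theorem circSteps_succ {u w v : ZMod n} {k : ℕ} (h : circSteps n a u w k)
    (harc : circArc n a w v) : circSteps n a u v (k + 1) := by
  obtain ⟨g, hg0, hgk, hstep⟩ := h
  refine ⟨Function.update g (k + 1) v, by simp [hg0], by simp, fun i hi => ?_⟩
  rcases Nat.lt_succ_iff_lt_or_eq.mp hi with hi | rfl
  · simpa [Function.update_of_ne (Nat.ne_of_lt (Nat.lt_succ_of_lt hi)),
      Function.update_of_ne (Nat.ne_of_lt (Nat.succ_lt_succ hi))] using hstep i hi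
  · simpa [hgk] using harc

theorem circSteps_iff {u v : ZMod n} {k : ℕ} :
    circSteps n a u v k ↔ ∃ i j : ℕ, i + j = k ∧ v = u + i + j * a := by
  induction k generalizing v with
  | zero =>
    constructor
    · rintro ⟨g, hg0, hgk, -⟩
      exact ⟨0, 0, rfl, by simp [← hg0, ← hgk]⟩
    · rintro ⟨i, j, hij, rfl⟩
      obtain ⟨rfl, rfl⟩ : i = 0 ∧ j = 0 := by omega
      exact ⟨fun _ => u, rfl, by simp, by simp⟩
  | succ k ih =>
    constructor
    · rintro ⟨g, hg0, hgk, hstep⟩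
      obtain ⟨i, j, rfl, hw⟩ := ih.mp ⟨g, hg0, rfl, fun i hi => hstep i (by omega)⟩
      rcases hstep (i + j) (by omega) with hv | hv <;> rw [← hgk, hv, hw]
      · exact ⟨i + 1, j, by omega, by push_cast; ring⟩
      · exact ⟨i, j + 1, by omega, by push_cast; ring⟩
    · rintro ⟨i, j, hij, rfl⟩
      rcases i with _ | i
      · obtain ⟨j, rfl⟩ : ∃ j', j = j' + 1 := ⟨j - 1, by omega⟩
        exact circSteps_succ (ih.mpr ⟨0, j, by omega, rfl⟩) (.inr (by push_cast; ring))
      · exact circSteps_succ (ih.mpr ⟨i, j, by omega, rfl⟩) (.inl (by push_cast; ring))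

theorem circDist_eq_sInf (u v : ZMod n) :
    circDist n a u v = sInf {k | ∃ i j : ℕ, i + j = k ∧ v - u = i + j * a} := by
  simp only [circDist, circSteps_iff, sub_eq_iff_eq_add', add_assoc]

theorem circDist_eq_circDist_zero (u v : ZMod n) : circDist n a u v = circDist n a 0 (v - u) := by
  simp only [circDist_eq_sInf, sub_zero]

theorem circEcc_eq_circEcc_zero (u : ZMod n) : circEcc n a u = circEcc n a 0 := by
  simp only [circEcc, circDist_eq_circDist_zero u, circDist_eq_circDist_zero 0, sub_zero]
  congr 1
  ext d
  exact ⟨fun ⟨v, hv⟩ => ⟨v - u, hv⟩, fun ⟨w, hw⟩ => ⟨w + u, by simpa using hw⟩⟩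

theorem circDiam_eq_circEcc_zero : circDiam n a = circEcc n a 0 := by
  simp only [circDiam, circEcc_eq_circEcc_zero, exists_const, Set.ofPred_eq_eq_singleton,
    csSup_singleton]

theorem circDist_zero_le_add {v : ZMod n} {i j : ℕ} (h : v = i + j * a) :
    circDist n a 0 v ≤ i + j :=
  (circDist_eq_sInf 0 v).trans_le (Nat.sInf_le ⟨i, j, rfl, by simpa using h⟩)

theorem le_circDist_zero [NeZero n] {v : ZMod n} {d : ℕ}
    (h : ∀ i j : ℕ, v = i + j * a → d ≤ i + j) : d ≤ circDist n a 0 v := by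
  rw [circDist_eq_sInf]
  refine le_csInf ⟨v.val, v.val, 0, rfl, by simp⟩ ?_
  rintro _ ⟨i, j, rfl, hv⟩
  exact h i j (by simpa using hv)

theorem circEcc_eq_of_forall_le {u v : ZMod n} {d : ℕ} (hle : ∀ w, circDist n a u w ≤ d)
    (hv : circDist n a u v = d) : circEcc n a u = d :=
  IsGreatest.csSup_eq ⟨⟨v, hv.symm⟩, by rintro _ ⟨w, rfl⟩; exact hle w⟩

end Walks

theorem Nat.mod_add_div_le_of_add_one_lt_mul {v q a : ℕ} (hv : v + 1 < (q + 1) * a) :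
    v % a + v / a ≤ q + a - 2 := by
  have ha : 0 < a := Nat.pos_of_ne_zero (by rintro rfl; simp at hv)
  have hdiv : v / a ≤ q :=
    Nat.lt_succ_iff.mp ((Nat.div_lt_iff_lt_mul ha).mpr (Nat.lt_of_succ_lt hv))
  have hmod := Nat.mod_lt v ha
  have hrepr := Nat.mod_add_div' v a
  rcases hdiv.lt_or_eq with hlt | heq
  · omega
  · rw [heq] at hrepr ⊢
    rw [add_one_mul] at hv
    omega

theorem Int.add_mul_sub_mul_le_add {i j a J : ℤ} (hi : 0 ≤ i) (ha : 1 ≤ a)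
    (hJ : i + j * a < (J + 1) * a) : i + j * a - J * (a - 1) ≤ i + j := by
  have hj : j ≤ J := by
    have : j * a < (J + 1) * a := by linarith
    exact Int.lt_add_one_iff.mp (lt_of_mul_lt_mul_right this (by linarith))
  nlinarith [mul_le_mul_of_nonneg_right hj (by linarith : (0 : ℤ) ≤ a - 1)]

theorem add_le_of_add_mul_modEq {q a R i j : ℕ} (hq : 1 ≤ q) (ha : 1 ≤ a) (hRa : R < a)
    (hR : R = 0 ∨ a ≤ R + q + 1) (h : i + j * a ≡ q * a - 1 [MOD q * a + R]) :
    q + a - 2 ≤ i + j := by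
  have hqa : 1 ≤ q * a := Nat.one_le_iff_ne_zero.mpr (by positivity)
  obtain ⟨N, hdecomp⟩ : ∃ N, i + j * a + 1 = N * (q * a + R) + q * a := by
    have hmod : (i + j * a) % (q * a + R) = q * a - 1 :=
      Eq.trans h (Nat.mod_eq_of_lt (by omega))
    have := Nat.div_add_mod (i + j * a) (q * a + R)
    rw [hmod] at this
    exact ⟨(i + j * a) / (q * a + R), by linarith [Nat.sub_add_cancel hqa]⟩
  suffices (q : ℤ) + a - 2 ≤ i + j by omega
  have hdecomp' : (i : ℤ) + j * a = N * (q * a + R) + q * a - 1 := by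
    rw [eq_sub_iff_add_eq]; exact_mod_cast hdecomp
  have hN : (0 : ℤ) ≤ N := by positivity
  have hi : (0 : ℤ) ≤ i := Int.natCast_nonneg i
  have ha' : (1 : ℤ) ≤ a := by exact_mod_cast ha
  rcases hR with rfl | haR
  · have := Int.add_mul_sub_mul_le_add (j := j) (J := (N + 1) * q - 1) hi ha'
      (by rw [hdecomp']; nlinarith)
    nlinarith
  · have := Int.add_mul_sub_mul_le_add (j := j) (J := (N + 1) * q + N - 1) hi ha'
      (by rw [hdecomp']; nlinarith)
    nlinarith

theorem circDist_zero_le_of_lt_mul {n q a : ℕ} [NeZero n] (hn : n < (q + 1) * a)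
    (v : ZMod n) : circDist n a 0 v ≤ q + a - 2 := by
  have hv : v = (v.val % a : ℕ) + (v.val / a : ℕ) * ((a : ℤ) : ZMod n) := by
    rw [Int.cast_natCast, ← Nat.cast_mul, ← Nat.cast_add, Nat.mod_add_div',
      ZMod.natCast_zmod_val]
  exact (circDist_zero_le_add hv).trans
    (Nat.mod_add_div_le_of_add_one_lt_mul (by linarith [ZMod.val_lt v]))

theorem circDist_zero_natCast_mul_sub_one {q a R : ℕ} (hq : 1 ≤ q) (ha : 1 ≤ a) (hRa : R < a)
    (hR : R = 0 ∨ a ≤ R + q + 1) :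
    circDist (q * a + R) a 0 ((q * a - 1 : ℕ) : ZMod (q * a + R)) = q + a - 2 := by
  have : NeZero (q * a + R) := ⟨by positivity⟩
  refine le_antisymm ((circDist_zero_le_add (i := a - 1) (j := q - 1) ?_).trans_eq (by omega))
    (le_circDist_zero fun i j h => add_le_of_add_mul_modEq hq ha hRa hR ?_)
  · rw [Int.cast_natCast, ← Nat.cast_mul, ← Nat.cast_add]
    congr 1
    have := Nat.le_mul_of_pos_left a hq
    rw [Nat.sub_one_mul]
    omega
  · rw [Int.cast_natCast, ← Nat.cast_mul, ← Nat.cast_add, ZMod.natCast_eq_natCast_iff] at h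
    exact h.symm

theorem stmt10 (n a q r : ℕ)
    (h : (n = q * a ∧ 4 ≤ a ∧ 3 ≤ q) ∨
         (n = q * a + r ∧ 2 ≤ q ∧ 1 ≤ r ∧ r ≤ a - 1 ∧ 4 ≤ a ∧ a ≤ r + q + 1)) :
    circDiam n (a : ℤ) = q + a - 2 ∧
    circDist n (a : ℤ) 0 ((q * a - 1 : ℕ) : ZMod n) = q + a - 2 := by
  obtain ⟨R, rfl, hRa, hq, ha, hR⟩ :
      ∃ R, n = q * a + R ∧ R < a ∧ 1 ≤ q ∧ 1 ≤ a ∧ (R = 0 ∨ a ≤ R + q + 1) := by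
    rcases h with ⟨rfl, ha, hq⟩ | ⟨rfl, hq, -, hra, ha, har⟩
    · exact ⟨0, rfl, by omega, by omega, by omega, .inl rfl⟩
    · exact ⟨r, rfl, by omega, by omega, by omega, .inr har⟩
  have : NeZero (q * a + R) := ⟨by positivity⟩
  have hdist := circDist_zero_natCast_mul_sub_one hq ha hRa hR
  have hle := circDist_zero_le_of_lt_mul (n := q * a + R) (q := q) (a := a)
    (by rw [add_one_mul]; omega)
  exact ⟨circDiam_eq_circEcc_zero.trans (circEcc_eq_of_forall_le hle hdist), hdist⟩
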